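/- Let G be a graph on n vertices that is the disjoint union of complete graphs K_m (on vertex set X) and K_n' (on vertex set Y) with n' = m > 1, plus exactly one additional edge {x_1, y_1} with x_1 ∈ X, y_1 ∈ Y. Then T_2(G) is not well-covered. -/

import Mathlib

/-!
Write `xᵢ`, `yⱼ` for the vertices of the two cliques. In `T₂(G)` two pairs on the same side are
adjacent exactly when they meet, so the same-side pairs of an independent set form matchings,
and a same-side pair is adjacent to a cross pair `{xᵢ, yⱼ}` only through the edge `x₁y₁`. Hence
a perfect transversal `{xᵢ, y_{e i}}` with `e x₁ = y₁`, together with maximum matchings of both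
cliques, is independent of size `m + 2⌊m/2⌋`. On the other hand, pick `z ≠ x₁` and a bijection
`σ` with `σ z = y₁`. An independent set containing the `m - 1` cross pairs `{xᵢ, y_{σ i}}`,
`i ≠ z`, and the pair `{x_z, x₁}` has no other cross pair (the only candidate, `{x_z, y₁}`, is
adjacent to `{x_z, x₁}`), so it has at most `m - 1 + 2⌊m/2⌋` elements. Maximal extensions of
these two sets have different sizes.
-/

/-- The `k`-token graph of `G`: vertices are the `k`-subsets of `V(G)`, two subsets
adjacent iff their symmetric difference is an edge of `G`. -/
def tokenGraph {V : Type*} [DecidableEq V] (G : SimpleGraph V) (k : ℕ) :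
    SimpleGraph {s : Finset V // s.card = k} where
  Adj A B := ∃ a b, G.Adj a b ∧ symmDiff A.1 B.1 = {a, b}
  symm := by
    constructor
    rintro A B ⟨a, b, hab, h⟩
    exact ⟨b, a, hab.symm, by rw [symmDiff_comm, h, Finset.pair_comm]⟩
  loopless := by
    constructor
    rintro A ⟨a, b, hab, h⟩
    rw [symmDiff_self] at h
    exact (Finset.insert_ne_empty a {b}) (by simpa using h.symm)

/-- A set of vertices is independent if no two of its members are adjacent. -/
def IndepSet {W : Type*} (G : SimpleGraph W) (s : Set W) : Prop :=
  s.Pairwise fun a b => ¬ G.Adj a b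

/-- The independence number of a finite graph. -/
noncomputable def indepNum {W : Type*} [Fintype W] (G : SimpleGraph W) : ℕ := by
  classical exact Finset.univ.sup fun s : Finset W => if IndepSet G ↑s then s.card else 0

/-- A graph is well-covered if all its maximal independent sets have the same cardinality. -/
def WellCovered {W : Type*} (G : SimpleGraph W) : Prop :=
  ∀ s t : Set W, Maximal (IndepSet G) s → Maximal (IndepSet G) t → s.ncard = t.ncard

/-- The disjoint union of two copies of `K_m` (on `X = Fin m ⊕ ∅` and `Y`),
together with the single extra edge `{x₁, y₁}`. -/
def twoCliquesPlusEdge (m : ℕ) (x₁ y₁ : Fin m) : SimpleGraph (Fin m ⊕ Fin m) where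
  Adj u v :=
    (∃ a b, u = Sum.inl a ∧ v = Sum.inl b ∧ a ≠ b) ∨
    (∃ a b, u = Sum.inr a ∧ v = Sum.inr b ∧ a ≠ b) ∨
    (u = Sum.inl x₁ ∧ v = Sum.inr y₁) ∨ (u = Sum.inr y₁ ∧ v = Sum.inl x₁)
  symm := by
    constructor
    rintro u v (⟨a, b, rfl, rfl, h⟩ | ⟨a, b, rfl, rfl, h⟩ | ⟨rfl, rfl⟩ | ⟨rfl, rfl⟩)
    · exact Or.inl ⟨b, a, rfl, rfl, h.symm⟩
    · exact Or.inr (Or.inl ⟨b, a, rfl, rfl, h.symm⟩)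
    · exact Or.inr (Or.inr (Or.inr ⟨rfl, rfl⟩))
    · exact Or.inr (Or.inr (Or.inl ⟨rfl, rfl⟩))
  loopless := by
    constructor
    rintro u (⟨a, b, rfl, h, hne⟩ | ⟨a, b, rfl, h, hne⟩ | ⟨rfl, h⟩ | ⟨rfl, h⟩) <;> simp_all


open Finset

namespace Finset

variable {α : Type*} [DecidableEq α]

theorem eq_pair_of_mem {s : Finset α} {a b : α} (hs : #s = 2) (ha : a ∈ s) (hb : b ∈ s)
    (hab : a ≠ b) : s = {a, b} :=
  (eq_of_subset_of_card_le (insert_subset ha (singleton_subset_iff.2 hb))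
    (by rw [hs, card_pair hab])).symm

theorem exists_pairwiseDisjoint_pairs (s : Finset α) :
    ∃ M : Finset (Finset α), (∀ P ∈ M, P ⊆ s ∧ #P = 2) ∧
      (M : Set (Finset α)).PairwiseDisjoint id ∧ #M = #s / 2 := by
  induction hn : #s using Nat.strong_induction_on generalizing s with
  | _ n ih =>
    by_cases hs : #s ≤ 1
    · exact ⟨∅, by simp, by simp, by rw [card_empty]; omega⟩
    obtain ⟨a, ha, b, hb, hab⟩ := one_lt_card.1 (not_le.1 hs)
    have hsub : {a, b} ⊆ s := insert_subset ha (singleton_subset_iff.2 hb)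
    have hcard : #(s \ {a, b}) = n - 2 := by rw [card_sdiff_of_subset hsub, card_pair hab, hn]
    obtain ⟨M, hMs, hMd, hMc⟩ := ih (n - 2) (by omega) (s \ {a, b}) hcard
    have hdisj : ∀ P ∈ M, Disjoint {a, b} P := fun P hP =>
      disjoint_of_subset_right (hMs P hP).1 disjoint_sdiff
    have hnot : {a, b} ∉ M := fun h =>
      disjoint_left.1 (hdisj _ h) (mem_insert_self a {b}) (mem_insert_self a {b})
    refine ⟨insert {a, b} M, ?_, ?_, ?_⟩
    · simp only [mem_insert, forall_eq_or_imp]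
      exact ⟨⟨hsub, card_pair hab⟩, fun P hP => ⟨(hMs P hP).1.trans sdiff_subset, (hMs P hP).2⟩⟩
    · rw [coe_insert]
      exact hMd.insert fun P hP _ => hdisj P hP
    · rw [card_insert_of_notMem hnot, hMc]
      omega

theorem mul_ncard_le_of_pairwiseDisjoint {k : ℕ} {s : Finset α} {F : Set (Finset α)}
    (hF : ∀ P ∈ F, P ⊆ s ∧ #P = k) (hd : F.PairwiseDisjoint id) : k * F.ncard ≤ #s := by
  have hfin : F.Finite := s.powerset.finite_toSet.subset fun P hP => mem_powerset.2 (hF P hP).1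
  lift F to Finset (Finset α) using hfin
  calc k * (F : Set (Finset α)).ncard = ∑ P ∈ F, #P := by
        rw [Set.ncard_coe_finset, sum_const_nat fun P hP => (hF P hP).2, mul_comm]
    _ = #(F.biUnion id) := (card_biUnion hd).symm
    _ ≤ #s := card_le_card (biUnion_subset.2 fun P hP => (hF P hP).1)

theorem exists_mem_inter_of_symmDiff_eq_pair {A B : Finset α} {a b : α}
    (hA : #A = 2) (hB : #B = 2) (hs : symmDiff A B = {a, b}) (ha : a ∈ A) (haB : a ∉ B) :
    ∃ c ∈ A, c ∈ B ∧ b ∈ B ∧ b ∉ A ∧ c ≠ a ∧ c ≠ b := by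
  have mem_pair : ∀ {x}, x ∈ A ∧ x ∉ B ∨ x ∈ B ∧ x ∉ A → x = a ∨ x = b := fun hx => by
    simpa [hs] using mem_symmDiff.2 hx
  have hb : b ∈ B ∧ b ∉ A := by
    have : b ∈ symmDiff A B := by simp [hs]
    refine (mem_symmDiff.1 this).resolve_left fun ⟨hbA, hbB⟩ => ?_
    have hBA : B ⊆ A := fun x hxB => by
      by_contra hxA
      rcases mem_pair (Or.inr ⟨hxB, hxA⟩) with rfl | rfl <;> contradiction
    exact haB (eq_of_subset_of_card_le hBA (by rw [hA, hB]) ▸ ha)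
  obtain ⟨c, hcA, hca⟩ := exists_mem_ne (by omega : 1 < #A) a
  have hcB : c ∈ B := by
    by_contra hcB
    rcases mem_pair (Or.inl ⟨hcA, hcB⟩) with rfl | rfl
    exacts [hca rfl, hb.2 hcA]
  exact ⟨c, hcA, hcB, hb.1, hb.2, hca, fun h => hb.2 (h ▸ hcA)⟩

theorem exists_eq_pair_inl_inr {β : Type*} [Fintype α] [Fintype β] [DecidableEq β]
    {A : Finset (α ⊕ β)} (hA : #A = 2) (hl : ¬ A ⊆ univ.map .inl) (hr : ¬ A ⊆ univ.map .inr) :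
    ∃ i j, A = {.inl i, .inr j} := by
  obtain ⟨u, v, -, rfl⟩ := card_eq_two.1 hA
  rcases u with i | j <;> rcases v with i' | j'
  · simp [insert_subset_iff] at hl
  · exact ⟨i, j', rfl⟩
  · exact ⟨i', j, pair_comm _ _⟩
  · simp [insert_subset_iff] at hr

end Finset

section IndepSet

variable {W : Type*} {H : SimpleGraph W} {s t : Set W}

theorem IndepSet.not_adj (hs : IndepSet H s) {a b : W} (ha : a ∈ s) (hb : b ∈ s) :
    ¬ H.Adj a b :=
  fun h => hs ha hb h.ne h

theorem IndepSet.union (hs : IndepSet H s) (ht : IndepSet H t)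
    (hst : ∀ a ∈ s, ∀ b ∈ t, ¬ H.Adj a b) : IndepSet H (s ∪ t) :=
  Set.pairwise_union.2 ⟨hs, ht, fun a ha b hb _ => ⟨hst a ha b hb, fun h => hst a ha b hb h.symm⟩⟩

end IndepSet

section TokenGraph

variable {V : Type*} [DecidableEq V] {G : SimpleGraph V} {A B : {s : Finset V // s.card = 2}}

theorem tokenGraph_two_adj_of_eq_pair {a b c : V} (hA : A.1 = {c, a}) (hB : B.1 = {c, b})
    (hab : G.Adj a b) : (tokenGraph G 2).Adj A B := by
  have hca : c ≠ a := by rintro rfl; simpa [hA] using A.2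
  have hcb : c ≠ b := by rintro rfl; simpa [hB] using B.2
  refine ⟨a, b, hab, ?_⟩
  rw [hA, hB]
  ext x
  simp only [mem_symmDiff, mem_insert, mem_singleton]
  have := hab.ne
  grind

theorem tokenGraph_two_adj_iff : (tokenGraph G 2).Adj A B ↔
    ∃ c a b, c ∈ A.1 ∧ c ∈ B.1 ∧ a ∈ A.1 ∧ b ∈ B.1 ∧ a ≠ c ∧ b ≠ c ∧ G.Adj a b := by
  constructor
  · rintro ⟨a, b, hab, hs⟩
    have ha : a ∈ symmDiff A.1 B.1 := by simp [hs]
    rcases mem_symmDiff.1 ha with ⟨haA, haB⟩ | ⟨haB, haA⟩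
    · obtain ⟨c, hcA, hcB, hbB, -, hca, hcb⟩ :=
        exists_mem_inter_of_symmDiff_eq_pair A.2 B.2 hs haA haB
      exact ⟨c, a, b, hcA, hcB, haA, hbB, hca.symm, hcb.symm, hab⟩
    · obtain ⟨c, hcB, hcA, hbA, -, hca, hcb⟩ :=
        exists_mem_inter_of_symmDiff_eq_pair B.2 A.2 (symmDiff_comm A.1 B.1 ▸ hs) haB haA
      exact ⟨c, b, a, hcA, hcB, hbA, haB, hcb.symm, hca.symm, hab.symm⟩
  · rintro ⟨c, a, b, hcA, hcB, haA, hbB, hac, hbc, hab⟩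
    exact tokenGraph_two_adj_of_eq_pair (eq_pair_of_mem A.2 hcA haA hac.symm)
      (eq_pair_of_mem B.2 hcB hbB hbc.symm) hab

theorem tokenGraph_two_not_adj_of_disjoint (h : Disjoint A.1 B.1) : ¬ (tokenGraph G 2).Adj A B :=
  fun hAB => by
    obtain ⟨c, -, -, hcA, hcB, -⟩ := tokenGraph_two_adj_iff.1 hAB
    exact disjoint_left.1 h hcA hcB

variable {J : Set {s : Finset V // s.card = 2}}

theorem IndepSet.preimage_val_of_pairwiseDisjoint {F : Set (Finset V)}
    (hF : F.PairwiseDisjoint id) : IndepSet (tokenGraph G 2) (Subtype.val ⁻¹' F) :=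
  fun _ hA _ hB hne => tokenGraph_two_not_adj_of_disjoint (hF hA hB (Subtype.val_injective.ne hne))

theorem IndepSet.pairwiseDisjoint_of_isClique (hJ : IndepSet (tokenGraph G 2) J) {s : Finset V}
    (hs : G.IsClique (s : Set V)) :
    (Subtype.val '' {A ∈ J | A.1 ⊆ s}).PairwiseDisjoint id := by
  rintro _ ⟨A, ⟨hAJ, hAs⟩, rfl⟩ _ ⟨B, ⟨hBJ, hBs⟩, rfl⟩ hne
  by_contra hAB
  obtain ⟨c, hcA, hcB⟩ := not_disjoint_iff.1 hAB
  obtain ⟨a, haA, hac⟩ := exists_mem_ne (by rw [A.2]; omega) c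
  obtain ⟨b, hbB, hbc⟩ := exists_mem_ne (by rw [B.2]; omega) c
  have hab : a ≠ b := by
    rintro rfl
    exact hne (by rw [eq_pair_of_mem A.2 hcA haA hac.symm, eq_pair_of_mem B.2 hcB hbB hbc.symm])
  exact hJ.not_adj hAJ hBJ
    (tokenGraph_two_adj_iff.2 ⟨c, a, b, hcA, hcB, haA, hbB, hac, hbc, hs (hAs haA) (hBs hbB) hab⟩)

theorem IndepSet.two_mul_ncard_le_of_isClique (hJ : IndepSet (tokenGraph G 2) J) {s : Finset V}
    (hs : G.IsClique (s : Set V)) : 2 * {A ∈ J | A.1 ⊆ s}.ncard ≤ #s := by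
  rw [← Set.ncard_image_of_injective _ Subtype.val_injective]
  refine mul_ncard_le_of_pairwiseDisjoint ?_ (hJ.pairwiseDisjoint_of_isClique hs)
  rintro _ ⟨A, ⟨-, hAs⟩, rfl⟩
  exact ⟨hAs, A.2⟩

end TokenGraph

section CrossPairs

variable {α β : Type*} [DecidableEq α] [DecidableEq β]

def crossPairs (f : α → β) (D : Set α) : Set (Finset (α ⊕ β)) :=
  (fun i => {.inl i, .inr (f i)}) '' D

theorem pairwiseDisjoint_crossPairs {f : α → β} {D : Set α} (hf : D.InjOn f) :
    (crossPairs f D).PairwiseDisjoint id := by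
  rintro _ ⟨i, hi, rfl⟩ _ ⟨j, hj, rfl⟩ hne
  have hij : i ≠ j := by rintro rfl; exact hne rfl
  simpa [Function.onFun] using ⟨hij.symm, (hf.ne hi hj hij).symm⟩

theorem ncard_crossPairs {f : α → β} {D : Set α} : (crossPairs f D).ncard = D.ncard :=
  Set.ncard_image_of_injective D fun i j h => by
    simpa using (Finset.ext_iff.1 h (.inl i)).1 (mem_insert_self _ _)

end CrossPairs

namespace twoCliquesPlusEdge

variable {m : ℕ} {x₁ y₁ : Fin m} {A B : {s : Finset (Fin m ⊕ Fin m) // s.card = 2}}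

@[simp] theorem adj_inl_inl {a b : Fin m} :
    (twoCliquesPlusEdge m x₁ y₁).Adj (.inl a) (.inl b) ↔ a ≠ b := by
  simp [twoCliquesPlusEdge]

@[simp] theorem adj_inr_inr {a b : Fin m} :
    (twoCliquesPlusEdge m x₁ y₁).Adj (.inr a) (.inr b) ↔ a ≠ b := by
  simp [twoCliquesPlusEdge]

@[simp] theorem adj_inl_inr {a b : Fin m} :
    (twoCliquesPlusEdge m x₁ y₁).Adj (.inl a) (.inr b) ↔ a = x₁ ∧ b = y₁ := by
  simp [twoCliquesPlusEdge]

@[simp] theorem adj_inr_inl {a b : Fin m} :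
    (twoCliquesPlusEdge m x₁ y₁).Adj (.inr b) (.inl a) ↔ a = x₁ ∧ b = y₁ := by
  simp [twoCliquesPlusEdge, and_comm]

theorem isClique_map_inl :
    (twoCliquesPlusEdge m x₁ y₁).IsClique (univ.map .inl : Finset (Fin m ⊕ Fin m)) := by
  intro u hu v hv hne
  obtain ⟨a, -, rfl⟩ := mem_map.1 (mem_coe.1 hu)
  obtain ⟨b, -, rfl⟩ := mem_map.1 (mem_coe.1 hv)
  simpa using hne

theorem isClique_map_inr :
    (twoCliquesPlusEdge m x₁ y₁).IsClique (univ.map .inr : Finset (Fin m ⊕ Fin m)) := by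
  intro u hu v hv hne
  obtain ⟨a, -, rfl⟩ := mem_map.1 (mem_coe.1 hu)
  obtain ⟨b, -, rfl⟩ := mem_map.1 (mem_coe.1 hv)
  simpa using hne

theorem tokenGraph_adj_of_subset_map_inl {d e : Fin m} (hA : A.1 = {.inl d, .inr e})
    (hB : B.1 ⊆ univ.map .inl) (h : (tokenGraph (twoCliquesPlusEdge m x₁ y₁) 2).Adj A B) :
    e = y₁ ∧ .inl d ∈ B.1 ∧ .inl x₁ ∈ B.1 ∧ d ≠ x₁ := by
  obtain ⟨c, a, b, hcA, hcB, haA, hbB, hac, hbc, hab⟩ := tokenGraph_two_adj_iff.1 h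
  rw [hA] at hcA haA
  obtain ⟨q, rfl⟩ : ∃ q, b = .inl q := by simpa [eq_comm] using hB hbB
  obtain ⟨p, rfl⟩ : ∃ p, c = .inl p := by simpa [eq_comm] using hB hcB
  obtain rfl : p = d := by simpa using hcA
  obtain rfl : a = .inr e := by simpa [hac] using haA
  obtain ⟨rfl, rfl⟩ := adj_inr_inl.1 hab
  exact ⟨rfl, hcB, hbB, fun h => hbc (h ▸ rfl)⟩

theorem tokenGraph_adj_of_subset_map_inr {d e : Fin m} (hA : A.1 = {.inl d, .inr e})
    (hB : B.1 ⊆ univ.map .inr) (h : (tokenGraph (twoCliquesPlusEdge m x₁ y₁) 2).Adj A B) :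
    d = x₁ ∧ .inr e ∈ B.1 ∧ .inr y₁ ∈ B.1 ∧ e ≠ y₁ := by
  obtain ⟨c, a, b, hcA, hcB, haA, hbB, hac, hbc, hab⟩ := tokenGraph_two_adj_iff.1 h
  rw [hA] at hcA haA
  obtain ⟨q, rfl⟩ : ∃ q, b = .inr q := by simpa [eq_comm] using hB hbB
  obtain ⟨p, rfl⟩ : ∃ p, c = .inr p := by simpa [eq_comm] using hB hcB
  obtain rfl : p = e := by simpa using hcA
  obtain rfl : a = .inl d := by simpa [hac] using haA
  obtain ⟨rfl, rfl⟩ := adj_inl_inr.1 hab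
  exact ⟨rfl, hcB, hbB, fun h => hbc (h ▸ rfl)⟩

/-- `hM` and `hN` exclude the only adjacencies between a cross pair and a same-side pair, both of
which use the edge `x₁y₁`. -/
theorem indepSet_crossPairs_union {f : Fin m → Fin m} {D : Set (Fin m)} (hf : D.InjOn f)
    {M N : Set (Finset (Fin m ⊕ Fin m))}
    (hMl : ∀ P ∈ M, P ⊆ univ.map .inl) (hNr : ∀ Q ∈ N, Q ⊆ univ.map .inr)
    (hMd : M.PairwiseDisjoint id) (hNd : N.PairwiseDisjoint id)
    (hM : ∀ d ∈ D, f d = y₁ → ∀ P ∈ M, .inl d ∈ P → .inl x₁ ∈ P → d = x₁)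
    (hN : x₁ ∈ D → ∀ Q ∈ N, .inr (f x₁) ∈ Q → .inr y₁ ∈ Q → f x₁ = y₁) :
    IndepSet (tokenGraph (twoCliquesPlusEdge m x₁ y₁) 2)
      (Subtype.val ⁻¹' (crossPairs f D ∪ M ∪ N)) := by
  rw [Set.preimage_union, Set.preimage_union]
  refine .union (.union (.preimage_val_of_pairwiseDisjoint (pairwiseDisjoint_crossPairs hf))
    (.preimage_val_of_pairwiseDisjoint hMd) ?_) (.preimage_val_of_pairwiseDisjoint hNd) ?_
  · rintro A ⟨d, hd, hA⟩ B hB hAB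
    obtain ⟨hfd, hdB, hxB, hdx⟩ := tokenGraph_adj_of_subset_map_inl hA.symm (hMl _ hB) hAB
    exact hdx (hM d hd hfd _ hB hdB hxB)
  · rintro A (⟨d, hd, hA⟩ | hA) B hB hAB
    · obtain ⟨rfl, hfB, hyB, hfy⟩ := tokenGraph_adj_of_subset_map_inr hA.symm (hNr _ hB) hAB
      exact hfy (hN hd _ hB hfB hyB)
    · exact tokenGraph_two_not_adj_of_disjoint (disjoint_of_subset_left (hMl _ hA)
        (disjoint_of_subset_right (hNr _ hB) (disjoint_map_inl_map_inr _ _))) hAB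

variable (x₁ y₁) in
theorem exists_indepSet_ncard_eq :
    ∃ S, IndepSet (tokenGraph (twoCliquesPlusEdge m x₁ y₁) 2) S ∧ S.ncard = m + m / 2 + m / 2 := by
  obtain ⟨M, hMs, hMd, hMc⟩ := exists_pairwiseDisjoint_pairs (univ.map (.inl : Fin m ↪ _ ⊕ Fin m))
  obtain ⟨N, hNs, hNd, hNc⟩ := exists_pairwiseDisjoint_pairs (univ.map (.inr : Fin m ↪ Fin m ⊕ _))
  set e := Equiv.swap x₁ y₁
  have he : e x₁ = y₁ := Equiv.swap_apply_left x₁ y₁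
  refine ⟨_, indepSet_crossPairs_union (D := Set.univ) e.injective.injOn
    (fun P hP => (hMs P hP).1) (fun Q hQ => (hNs Q hQ).1) hMd hNd
    (fun d _ hd _ _ _ _ => e.injective (hd.trans he.symm)) (fun _ _ _ _ _ => he), ?_⟩
  have hcross : Disjoint (crossPairs e Set.univ) (M : Set _) := by
    rw [Set.disjoint_left]
    rintro _ ⟨i, -, rfl⟩ hM
    simpa using (hMs _ hM).1 (mem_insert_of_mem (mem_singleton_self _))
  have hcrossM : Disjoint (crossPairs e Set.univ ∪ M) (N : Set _) := by
    rw [Set.disjoint_left]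
    rintro _ (⟨i, -, rfl⟩ | hM) hN
    · simpa using (hNs _ hN).1 (mem_insert_self _ _)
    · obtain ⟨a, ha⟩ := card_pos.1 (by rw [(hMs _ hM).2]; omega)
      exact disjoint_left.1 (disjoint_map_inl_map_inr _ _) ((hMs _ hM).1 ha) ((hNs _ hN).1 ha)
  rw [Set.ncard_preimage_of_injective_subset_range Subtype.val_injective,
    Set.ncard_union_eq hcrossM, Set.ncard_union_eq hcross, ncard_crossPairs,
    Set.ncard_coe_finset, Set.ncard_coe_finset, hMc, hNc]
  · simp
  · rintro _ ((⟨i, -, rfl⟩ | hM) | hN)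
    · exact ⟨⟨_, card_pair (by simp)⟩, rfl⟩
    · exact ⟨⟨_, (hMs _ hM).2⟩, rfl⟩
    · exact ⟨⟨_, (hNs _ hN).2⟩, rfl⟩

theorem eq_of_mem_of_indepSet_of_subset {σ : Equiv.Perm (Fin m)} {z : Fin m} (hσ : σ z = y₁)
    (hz : z ≠ x₁) {J : Set {s : Finset (Fin m ⊕ Fin m) // s.card = 2}}
    (hJ : IndepSet (tokenGraph (twoCliquesPlusEdge m x₁ y₁) 2) J)
    (hT : Subtype.val ⁻¹' (crossPairs σ {z}ᶜ ∪ {{.inl z, .inl x₁}}) ⊆ J) (hBJ : B ∈ J)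
    {i j : Fin m} (hB : B.1 = {.inl i, .inr j}) : i ≠ z ∧ j = σ i := by
  have mem_cross : ∀ k ≠ z, (⟨{.inl k, .inr (σ k)}, card_pair (by simp)⟩ : {s // #s = 2}) ∈ J :=
    fun k hk => hT (Or.inl ⟨k, hk, rfl⟩)
  have hi : i ≠ z := by
    rintro rfl
    by_cases hj : j = y₁
    · subst hj
      have mem_pair : (⟨{.inl i, .inl x₁}, card_pair (by simpa using hz)⟩ : {s // #s = 2}) ∈ J :=
        hT (Or.inr rfl)
      exact hJ.not_adj hBJ mem_pair (tokenGraph_two_adj_of_eq_pair hB rfl (by simp))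
    · have hk : σ.symm j ≠ i := fun h => hj (by rw [← hσ, ← h, Equiv.apply_symm_apply])
      exact hJ.not_adj hBJ (mem_cross _ hk) (tokenGraph_two_adj_of_eq_pair (c := .inr j)
        (b := .inl (σ.symm j)) (by rw [hB, pair_comm]) (by simp [pair_comm])
        (by simpa using hk.symm))
  refine ⟨hi, by_contra fun hj => hJ.not_adj hBJ (mem_cross i hi) ?_⟩
  exact tokenGraph_two_adj_of_eq_pair hB rfl (by simpa using hj)

theorem ncard_le_of_indepSet_of_subset {σ : Equiv.Perm (Fin m)} {z : Fin m} (hσ : σ z = y₁)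
    (hz : z ≠ x₁) {J : Set {s : Finset (Fin m ⊕ Fin m) // s.card = 2}}
    (hJ : IndepSet (tokenGraph (twoCliquesPlusEdge m x₁ y₁) 2) J)
    (hT : Subtype.val ⁻¹' (crossPairs σ {z}ᶜ ∪ {{.inl z, .inl x₁}}) ⊆ J) :
    J.ncard ≤ m - 1 + m / 2 + m / 2 := by
  have hsplit : J ⊆ {A ∈ J | A.1 ⊆ univ.map .inl} ∪ {A ∈ J | A.1 ⊆ univ.map .inr} ∪
      Subtype.val ⁻¹' crossPairs σ {z}ᶜ := by
    intro B hB
    by_cases hl : B.1 ⊆ univ.map .inl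
    · exact Or.inl (Or.inl ⟨hB, hl⟩)
    by_cases hr : B.1 ⊆ univ.map .inr
    · exact Or.inl (Or.inr ⟨hB, hr⟩)
    obtain ⟨i, j, hBe⟩ := exists_eq_pair_inl_inr B.2 hl hr
    obtain ⟨hi, rfl⟩ := eq_of_mem_of_indepSet_of_subset hσ hz hJ hT hB hBe
    exact Or.inr ⟨i, hi, hBe.symm⟩
  have hX := hJ.two_mul_ncard_le_of_isClique isClique_map_inl
  have hY := hJ.two_mul_ncard_le_of_isClique isClique_map_inr
  have hC : (Subtype.val ⁻¹' crossPairs σ {z}ᶜ : Set {s : Finset _ // #s = 2}).ncard ≤ m - 1 :=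
    calc _ ≤ (crossPairs σ {z}ᶜ).ncard := by
          rw [← Set.ncard_image_of_injective _ Subtype.val_injective]
          exact Set.ncard_le_ncard (Set.image_preimage_subset _ _)
      _ = m - 1 := by rw [ncard_crossPairs, Set.ncard_compl]; simp
  simp only [card_map, card_univ, Fintype.card_fin] at hX hY
  calc J.ncard ≤ _ := Set.ncard_le_ncard hsplit
    _ ≤ _ := (Set.ncard_union_le _ _).trans (Nat.add_le_add_right (Set.ncard_union_le _ _) _)
    _ ≤ m - 1 + m / 2 + m / 2 := by omega

variable (x₁ y₁) in
theorem exists_indepSet_forall_ncard_le (hm : 1 < m) :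
    ∃ T, IndepSet (tokenGraph (twoCliquesPlusEdge m x₁ y₁) 2) T ∧
      ∀ J, IndepSet (tokenGraph (twoCliquesPlusEdge m x₁ y₁) 2) J → T ⊆ J →
        J.ncard ≤ m - 1 + m / 2 + m / 2 := by
  have : Nontrivial (Fin m) := Fin.nontrivial_iff_two_le.2 hm
  obtain ⟨z, hz⟩ := exists_ne x₁
  set σ : Equiv.Perm (Fin m) := (Equiv.swap x₁ z).trans (Equiv.swap x₁ y₁)
  have hσ : σ z = y₁ := by simp [σ]
  have hT := indepSet_crossPairs_union (x₁ := x₁) σ.injective.injOn (D := {z}ᶜ)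
    (M := {{.inl z, .inl x₁}}) (N := ∅) (by simp [insert_subset_iff]) (by simp)
    (Set.pairwiseDisjoint_singleton _ _) Set.pairwiseDisjoint_empty
    (fun d hd hd' => absurd (σ.injective (hd'.trans hσ.symm)) hd) (by simp)
  rw [Set.union_empty] at hT
  exact ⟨_, hT, fun J hJ hTJ => ncard_le_of_indepSet_of_subset hσ hz hJ hTJ⟩

end twoCliquesPlusEdge

theorem stmt19 (m : ℕ) (hm : 1 < m) (x₁ y₁ : Fin m) :
    ¬ WellCovered (tokenGraph (twoCliquesPlusEdge m x₁ y₁) 2) := by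
  intro hwc
  obtain ⟨S, hS, hSc⟩ := twoCliquesPlusEdge.exists_indepSet_ncard_eq x₁ y₁
  obtain ⟨T, hT, hTbound⟩ := twoCliquesPlusEdge.exists_indepSet_forall_ncard_le x₁ y₁ hm
  obtain ⟨S', hSS', hS'⟩ := Finite.exists_le_maximal hS
  obtain ⟨T', hTT', hT'⟩ := Finite.exists_le_maximal hT
  have hS'c : S.ncard ≤ S'.ncard := Set.ncard_le_ncard hSS'
  have hT'c := hTbound T' hT'.prop hTT'
  have := hwc S' T' hS' hT'
  omega
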